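/- arXiv:1602.00547 — 4 statements merged into one kernel-verified Lean document; each statement's English description precedes it below -/
import Mathlib

section
/- Under assumptions (A2) and (A3), let x ∈ 𝔾 and z > 0, and let (u*, q*) be a feasible pair attaining J*(x,z) such that no feasible pair with a strictly smaller horizon attains J*(x,z). Then the minimum of W along the optimal trajectory is attained at the final index, i.e. min_{1≤ℓ≤q*} W(x^{u*}_ℓ(x)) = W(x^{u*}_{q*}(x)). -/
open Filter Topology

noncomputable section

/-- The state space `ℝⁿ` with the Euclidean norm. -/
abbrev Euc (n : ℕ) := EuclideanSpace ℝ (Fin n)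

/-- Predicted trajectory: `traj f x u ℓ` is the state `x^u_ℓ(x)` reached `ℓ` steps ahead
starting from `x` and applying the controls `u 0, u 1, …` (so `traj f x u 0 = x` and
`x^u_1(x) = f x (u 0)`). -/
def traj {n m : ℕ} (f : Euc n → Euc m → Euc n) (x : Euc n) (u : ℕ → Euc m) : ℕ → Euc n
  | 0 => x
  | ℓ + 1 => f (traj f x u ℓ) (u ℓ)

/-- `Φ(x,u,q) = Σ_{ℓ=1}^q L(x^u_ℓ(x), u_ℓ)`. -/
def Phi {n m : ℕ} (f : Euc n → Euc m → Euc n) (L : Euc n → Euc m → ℝ)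
    (x : Euc n) (u : ℕ → Euc m) (q : ℕ) : ℝ :=
  ∑ i ∈ Finset.range q, L (traj f x u (i + 1)) (u i)

/-- `W̲(x,u,q) = min_{1 ≤ ℓ ≤ q} W(x^u_ℓ(x))`. -/
def Wlow {n m : ℕ} (f : Euc n → Euc m → Euc n) (W : Euc n → ℝ)
    (x : Euc n) (u : ℕ → Euc m) (q : ℕ) : ℝ :=
  sInf ((fun ℓ => W (traj f x u ℓ)) '' Set.Icc 1 q)

/-- The cost `J^{(x,z)}(u,q) = z·Φ(x,u,q) + α·W̲(x,u,q)`. -/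
def Jcost {n m : ℕ} (f : Euc n → Euc m → Euc n) (L : Euc n → Euc m → ℝ) (W : Euc n → ℝ)
    (α : ℝ) (x : Euc n) (z : ℝ) (u : ℕ → Euc m) (q : ℕ) : ℝ :=
  z * Phi f L x u q + α * Wlow f W x u q

/-- A pair `(u, q)` is feasible for `P(x,z)`: controls in `𝕌`, horizon `1 ≤ q ≤ N`, and the
predicted states over the horizon stay in `𝔾`. -/
def Feasible {n m : ℕ} (f : Euc n → Euc m → Euc n) (𝕌 : Set (Euc m)) (𝔾 : Set (Euc n))
    (N : ℕ) (x : Euc n) (u : ℕ → Euc m) (q : ℕ) : Prop :=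
  (∀ i, u i ∈ 𝕌) ∧ 1 ≤ q ∧ q ≤ N ∧ ∀ ℓ ∈ Set.Icc 1 q, traj f x u ℓ ∈ 𝔾

/-- `J*(x,z)`: the infimum of the cost over feasible pairs. -/
def Jstar {n m : ℕ} (f : Euc n → Euc m → Euc n) (𝕌 : Set (Euc m)) (𝔾 : Set (Euc n))
    (N : ℕ) (L : Euc n → Euc m → ℝ) (W : Euc n → ℝ) (α : ℝ) (x : Euc n) (z : ℝ) : ℝ :=
  sInf {c | ∃ u q, Feasible f 𝕌 𝔾 N x u q ∧ c = Jcost f L W α x z u q}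

/-- Assumption (A2): `W` is continuous and positive definite, `γ ∈ (0,1)`, `N ≥ 1`, and from
every admissible state there is an admissible control sequence contracting `W` by `γ`
within `N` steps. -/
def A2 {n m : ℕ} (f : Euc n → Euc m → Euc n) (𝕌 : Set (Euc m)) (𝔾 : Set (Euc n))
    (W : Euc n → ℝ) (γ : ℝ) (N : ℕ) : Prop :=
  Continuous W ∧ W 0 = 0 ∧ (∀ x, x ≠ 0 → 0 < W x) ∧ γ ∈ Set.Ioo (0 : ℝ) 1 ∧ 1 ≤ N ∧
    ∀ x ∈ 𝔾, ∃ u : ℕ → Euc m, (∀ i, u i ∈ 𝕌) ∧ (∀ ℓ ∈ Set.Icc 1 N, traj f x u ℓ ∈ 𝔾) ∧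
      Wlow f W x u N ≤ γ * W x

/-- Assumption (A3): the stage cost `L` satisfies `0 ≤ L ≤ L̄` on `𝔾 × 𝕌`, and
`Q(x) := L(x,0)` is positive definite with `Q(x) ≤ L(x,u)` for all `u`. -/
def A3 {n m : ℕ} (𝕌 : Set (Euc m)) (𝔾 : Set (Euc n)) (L : Euc n → Euc m → ℝ)
    (Lbar : ℝ) : Prop :=
  (∀ x ∈ 𝔾, ∀ u ∈ 𝕌, 0 ≤ L x u ∧ L x u ≤ Lbar) ∧
    L 0 0 = 0 ∧ (∀ x, x ≠ 0 → 0 < L x 0) ∧ (∀ x u, L x 0 ≤ L x u)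

/-- Lemma 1, eq. (14): under (A2) and (A3), if `(u*, q*)` is a feasible pair
attaining `J*(x,z)` such that no feasible pair with a strictly smaller horizon attains
`J*(x,z)`, then the minimum of `W` along the optimal trajectory is attained at the final
index: `min_{1≤ℓ≤q*} W(x^{u*}_ℓ(x)) = W(x^{u*}_{q*}(x))`. -/
theorem min_of_W_attained_at_final_index {n m : ℕ}
    (f : Euc n → Euc m → Euc n) (𝕌 : Set (Euc m)) (𝔾 : Set (Euc n))
    (W : Euc n → ℝ) (L : Euc n → Euc m → ℝ) (γ Lbar α : ℝ) (N : ℕ)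
    (hf0 : f 0 0 = 0) (hUcomp : IsCompact 𝕌) (hU0 : (0 : Euc m) ∈ 𝕌)
    (hG0 : (0 : Euc n) ∈ 𝔾)
    (hA2 : A2 f 𝕌 𝔾 W γ N) (hA3 : A3 𝕌 𝔾 L Lbar) (hα : 0 < α)
    (x : Euc n) (z : ℝ) (hx : x ∈ 𝔾) (hz : 0 < z)
    (ustar : ℕ → Euc m) (qstar : ℕ)
    (hfeas : Feasible f 𝕌 𝔾 N x ustar qstar)
    (hopt : Jcost f L W α x z ustar qstar = Jstar f 𝕌 𝔾 N L W α x z)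
    (hmin : ∀ u q, Feasible f 𝕌 𝔾 N x u q →
      Jcost f L W α x z u q = Jstar f 𝕌 𝔾 N L W α x z → qstar ≤ q) :
    Wlow f W x ustar qstar = W (traj f x ustar qstar) := by
  obtain ⟨hU, hq1, hqN, hG⟩ := hfeas
  obtain ⟨hWc, hW0, hWpos, hγ, hN, _⟩ := hA2
  obtain ⟨hL, -, -, -⟩ := hA3
  have hWnn : ∀ y, 0 ≤ W y := by
    intro y
    rcases eq_or_ne y 0 with h | h
    · simp [h, hW0]
    · exact (hWpos y h).le
  set S := (fun ℓ => W (traj f x ustar ℓ)) '' Set.Icc 1 qstar with hSdef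
  have hSne : S.Nonempty := ⟨_, ⟨qstar, ⟨hq1, le_rfl⟩, rfl⟩⟩
  have hSfin : S.Finite := (Set.finite_Icc 1 qstar).image _
  have hSbdd : BddBelow S := hSfin.bddBelow
  obtain ⟨ℓ0, hℓ0, hval⟩ := hSne.csInf_mem hSfin
  -- feasibility of the truncated pair
  have hfeas0 : Feasible f 𝕌 𝔾 N x ustar ℓ0 :=
    ⟨hU, hℓ0.1, le_trans hℓ0.2 hqN, fun ℓ hℓ => hG ℓ ⟨hℓ.1, le_trans hℓ.2 hℓ0.2⟩⟩
  -- Wlow equality at ℓ0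
  have hWloweq : Wlow f W x ustar ℓ0 = Wlow f W x ustar qstar := by
    apply le_antisymm
    · have h1 : Wlow f W x ustar ℓ0 ≤ W (traj f x ustar ℓ0) := by
        apply csInf_le (((Set.finite_Icc 1 ℓ0).image _).bddBelow)
        exact ⟨ℓ0, ⟨hℓ0.1, le_rfl⟩, rfl⟩
      exact h1.trans_eq hval
    · refine csInf_le_csInf hSbdd ⟨_, ⟨ℓ0, ⟨hℓ0.1, le_rfl⟩, rfl⟩⟩ ?_
      exact Set.image_mono (Set.Icc_subset_Icc le_rfl hℓ0.2)
  -- Phi monotone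
  have hPhi : Phi f L x ustar ℓ0 ≤ Phi f L x ustar qstar := by
    apply Finset.sum_le_sum_of_subset_of_nonneg (Finset.range_subset_range.2 hℓ0.2)
    intro i hi _
    exact (hL _ (hG (i + 1) ⟨Nat.succ_le_succ (Nat.zero_le i),
      Finset.mem_range.1 hi⟩) _ (hU i)).1
  -- Jcost at ℓ0 ≤ Jcost at qstar
  have hJle : Jcost f L W α x z ustar ℓ0 ≤ Jcost f L W α x z ustar qstar := by
    unfold Jcost
    rw [hWloweq]
    exact add_le_add_left (mul_le_mul_of_nonneg_left hPhi hz.le) _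
  -- cost set lower bound
  have hcostnn : ∀ u q, Feasible f 𝕌 𝔾 N x u q → 0 ≤ Jcost f L W α x z u q := by
    intro u q ⟨hU', hq1', hqN', hG'⟩
    have hP : 0 ≤ Phi f L x u q :=
      Finset.sum_nonneg fun i hi =>
        (hL _ (hG' (i + 1) ⟨Nat.succ_le_succ (Nat.zero_le i), Finset.mem_range.1 hi⟩)
          _ (hU' i)).1
    have hWl : 0 ≤ Wlow f W x u q :=
      le_csInf ⟨_, ⟨q, ⟨hq1', le_rfl⟩, rfl⟩⟩ (by rintro b ⟨ℓ, -, rfl⟩; exact hWnn _)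
    have := hα.le; have := hz.le
    unfold Jcost
    positivity
  have hbddC : BddBelow {c | ∃ u q, Feasible f 𝕌 𝔾 N x u q ∧
      c = Jcost f L W α x z u q} := by
    refine ⟨0, ?_⟩
    rintro c ⟨u, q, hfq, rfl⟩
    exact hcostnn u q hfq
  have hJstar_le : Jstar f 𝕌 𝔾 N L W α x z ≤ Jcost f L W α x z ustar ℓ0 :=
    csInf_le hbddC ⟨ustar, ℓ0, hfeas0, rfl⟩
  have hJeq : Jcost f L W α x z ustar ℓ0 = Jstar f 𝕌 𝔾 N L W α x z :=
    le_antisymm (hJle.trans_eq hopt) hJstar_le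
  have hq : qstar ≤ ℓ0 := hmin ustar ℓ0 hfeas0 hJeq
  have : ℓ0 = qstar := le_antisymm hℓ0.2 hq
  have hWS : Wlow f W x ustar qstar = sInf S := rfl
  rw [hWS, ← hval, this]
end
end

section
/- Under assumptions (A2) and (A3), if x ∈ 𝔾 and z > 0 satisfy W(x) > z, and the penalty satisfies α ≥ 2·N·L̄/(1−γ), then the optimal value satisfies J*(x,z) ≤ ((1+γ)/2)·α·W(x). -/
open Filter Topology

noncomputable section

/-- Corollary 1: under (A2) and (A3), if `W(x) > z` and
`α ≥ 2·N·L̄/(1−γ)`, then `J*(x,z) ≤ ((1+γ)/2)·α·W(x)`. -/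
theorem Jstar_upper_bound_of_Wx_gt_z {n m : ℕ}
    (f : Euc n → Euc m → Euc n) (𝕌 : Set (Euc m)) (𝔾 : Set (Euc n))
    (W : Euc n → ℝ) (L : Euc n → Euc m → ℝ) (γ Lbar α : ℝ) (N : ℕ)
    (hf0 : f 0 0 = 0) (hUcomp : IsCompact 𝕌) (hU0 : (0 : Euc m) ∈ 𝕌)
    (hG0 : (0 : Euc n) ∈ 𝔾)
    (hA2 : A2 f 𝕌 𝔾 W γ N) (hA3 : A3 𝕌 𝔾 L Lbar)
    (hα : 0 < α) (hαbig : 2 * N * Lbar / (1 - γ) ≤ α)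
    (x : Euc n) (z : ℝ) (hx : x ∈ 𝔾) (hz : 0 < z) (hWx : z < W x) :
    Jstar f 𝕌 𝔾 N L W α x z ≤ (1 + γ) / 2 * α * W x := by
  obtain ⟨hWcont, hW0, hWpos, ⟨hγ0, hγ1⟩, hN1, hcontract⟩ := hA2
  obtain ⟨hLbd, hL00, hLpos, hLmin⟩ := hA3
  obtain ⟨u, hu, hGu, hWlowu⟩ := hcontract x hx
  have hWnn : ∀ y : Euc n, 0 ≤ W y := by
    intro y
    rcases eq_or_ne y 0 with h | h
    · simp [h, hW0]
    · exact (hWpos y h).le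
  have hLbar0 : 0 ≤ Lbar :=
    le_trans (hLbd 0 hG0 0 hU0).1 (hLbd 0 hG0 0 hU0).2
  have hWlow_nn : ∀ (u' : ℕ → Euc m) (q : ℕ), 0 ≤ Wlow f W x u' q := by
    intro u' q
    apply Real.sInf_nonneg
    rintro _ ⟨ℓ, _, rfl⟩
    exact hWnn _
  have hPhi_nn : ∀ (u' : ℕ → Euc m) (q : ℕ), Feasible f 𝕌 𝔾 N x u' q →
      0 ≤ Phi f L x u' q := by
    rintro u' q ⟨hu', hq1, hqN, hG'⟩
    apply Finset.sum_nonneg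
    intro i hi
    exact (hLbd _ (hG' (i + 1) ⟨Nat.succ_le_succ (Nat.zero_le _),
      Nat.succ_le_of_lt (Finset.mem_range.mp hi)⟩) _ (hu' i)).1
  have hbdd : BddBelow {c | ∃ u' q, Feasible f 𝕌 𝔾 N x u' q ∧ c = Jcost f L W α x z u' q} := by
    refine ⟨0, ?_⟩
    rintro c ⟨u', q, hfeas, rfl⟩
    have h1 := hPhi_nn u' q hfeas
    have h2 := hWlow_nn u' q
    have := mul_nonneg hz.le h1
    have := mul_nonneg hα.le h2
    unfold Jcost
    linarith
  have hfeas : Feasible f 𝕌 𝔾 N x u N := ⟨hu, hN1, le_refl N, hGu⟩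
  have hmem : Jcost f L W α x z u N ∈
      {c | ∃ u' q, Feasible f 𝕌 𝔾 N x u' q ∧ c = Jcost f L W α x z u' q} :=
    ⟨u, N, hfeas, rfl⟩
  have hle : Jstar f 𝕌 𝔾 N L W α x z ≤ Jcost f L W α x z u N := csInf_le hbdd hmem
  have hPhiN : Phi f L x u N ≤ N * Lbar := by
    calc Phi f L x u N ≤ ∑ _i ∈ Finset.range N, Lbar := by
          apply Finset.sum_le_sum
          intro i hi
          exact (hLbd _ (hGu (i + 1) ⟨Nat.succ_le_succ (Nat.zero_le _),
            Nat.succ_le_of_lt (Finset.mem_range.mp hi)⟩) _ (hu i)).2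
      _ = N * Lbar := by simp [Finset.sum_const, nsmul_eq_mul]
  have hγlt : (0 : ℝ) < 1 - γ := by linarith
  have hNL : (N : ℝ) * Lbar ≤ α * (1 - γ) / 2 := by
    have := (div_le_iff₀ hγlt).mp hαbig
    linarith
  have hWx0 : 0 < W x := lt_trans hz hWx
  have h1 : z * Phi f L x u N ≤ W x * (N * Lbar) := by
    calc z * Phi f L x u N ≤ z * (N * Lbar) :=
          mul_le_mul_of_nonneg_left hPhiN hz.le
      _ ≤ W x * (N * Lbar) :=
          mul_le_mul_of_nonneg_right hWx.le (by positivity)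
  have h2 : α * Wlow f W x u N ≤ α * (γ * W x) :=
    mul_le_mul_of_nonneg_left hWlowu hα.le
  have h3 : Jcost f L W α x z u N ≤ (1 + γ) / 2 * α * W x := by
    unfold Jcost
    have : W x * (N * Lbar) ≤ W x * (α * (1 - γ) / 2) :=
      mul_le_mul_of_nonneg_left hNL hWx0.le
    nlinarith
  linarith
end
end

section
/- Under assumptions (A2) and (A3), let x ∈ 𝔾 and z > 0 with W(x) > z, and let (u*, q*) be a feasible pair attaining J*(x,z), with q* > 1, such that no feasible pair with a strictly smaller horizon attains J*(x,z). Set x' := f(x, u*₁) (the successor state under the first optimal control). Then J*(x', z) ≤ J*(x,z) − z·Q(x'). -/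
open Filter Topology

noncomputable section

lemma traj_shift {n m : ℕ} (f : Euc n → Euc m → Euc n) (x : Euc n) (u : ℕ → Euc m) :
    ∀ ℓ, traj f (f x (u 0)) (fun i => u (i + 1)) ℓ = traj f x u (ℓ + 1)
  | 0 => rfl
  | ℓ + 1 => by
      show f (traj f (f x (u 0)) (fun i => u (i + 1)) ℓ) (u (ℓ + 1)) = _
      rw [traj_shift f x u ℓ]; rfl

lemma Jcost_nonneg {n m : ℕ} (f : Euc n → Euc m → Euc n) (𝕌 : Set (Euc m)) (𝔾 : Set (Euc n))
    (N : ℕ) (L : Euc n → Euc m → ℝ) (W : Euc n → ℝ) (α : ℝ) (x : Euc n) (z : ℝ)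
    (hW : ∀ y, 0 ≤ W y) (hL : ∀ y ∈ 𝔾, ∀ v ∈ 𝕌, 0 ≤ L y v)
    (hz : 0 ≤ z) (hα : 0 ≤ α) (u : ℕ → Euc m) (q : ℕ)
    (hf : Feasible f 𝕌 𝔾 N x u q) : 0 ≤ Jcost f L W α x z u q := by
  obtain ⟨hU, hq1, hqN, hG⟩ := hf
  have hPhi : 0 ≤ Phi f L x u q := by
    apply Finset.sum_nonneg
    intro i hi
    exact hL _ (hG (i + 1) ⟨Nat.succ_le_succ (Nat.zero_le i),
      Nat.succ_le_of_lt (Finset.mem_range.mp hi)⟩) _ (hU i)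
  have hWl : 0 ≤ Wlow f W x u q := by
    refine le_csInf ⟨W (traj f x u 1), ⟨1, ⟨le_refl 1, hq1⟩, rfl⟩⟩ ?_
    rintro b ⟨ℓ, -, rfl⟩
    exact hW _
  exact add_nonneg (mul_nonneg hz hPhi) (mul_nonneg hα hWl)

lemma Jstar_le_Jcost {n m : ℕ} (f : Euc n → Euc m → Euc n) (𝕌 : Set (Euc m)) (𝔾 : Set (Euc n))
    (N : ℕ) (L : Euc n → Euc m → ℝ) (W : Euc n → ℝ) (α : ℝ) (x : Euc n) (z : ℝ)
    (hW : ∀ y, 0 ≤ W y) (hL : ∀ y ∈ 𝔾, ∀ v ∈ 𝕌, 0 ≤ L y v)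
    (hz : 0 ≤ z) (hα : 0 ≤ α) (u : ℕ → Euc m) (q : ℕ)
    (hf : Feasible f 𝕌 𝔾 N x u q) :
    Jstar f 𝕌 𝔾 N L W α x z ≤ Jcost f L W α x z u q := by
  refine csInf_le ⟨0, ?_⟩ ⟨u, q, hf, rfl⟩
  rintro c ⟨u', q', hf', rfl⟩
  exact Jcost_nonneg f 𝕌 𝔾 N L W α x z hW hL hz hα u' q' hf'

/-- Lemma 2: under (A2) and (A3), if `W(x) > z`, `(u*, q*)` is a feasible
pair attaining `J*(x,z)` with `q* > 1` and no feasible pair of strictly smaller horizon attains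
`J*(x,z)`, then with `x' := f(x, u*₁)` one has `J*(x', z) ≤ J*(x,z) − z·Q(x')`. -/
theorem Jstar_decrease_of_qstar_gt_one {n m : ℕ}
    (f : Euc n → Euc m → Euc n) (𝕌 : Set (Euc m)) (𝔾 : Set (Euc n))
    (W : Euc n → ℝ) (L : Euc n → Euc m → ℝ) (γ Lbar α : ℝ) (N : ℕ)
    (hf0 : f 0 0 = 0) (hUcomp : IsCompact 𝕌) (hU0 : (0 : Euc m) ∈ 𝕌)
    (hG0 : (0 : Euc n) ∈ 𝔾)
    (hA2 : A2 f 𝕌 𝔾 W γ N) (hA3 : A3 𝕌 𝔾 L Lbar) (hα : 0 < α)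
    (x : Euc n) (z : ℝ) (hx : x ∈ 𝔾) (hz : 0 < z) (hWx : z < W x)
    (ustar : ℕ → Euc m) (qstar : ℕ)
    (hfeas : Feasible f 𝕌 𝔾 N x ustar qstar)
    (hopt : Jcost f L W α x z ustar qstar = Jstar f 𝕌 𝔾 N L W α x z)
    (hq : 1 < qstar)
    (hmin : ∀ u q, Feasible f 𝕌 𝔾 N x u q →
      Jcost f L W α x z u q = Jstar f 𝕌 𝔾 N L W α x z → qstar ≤ q) :
    Jstar f 𝕌 𝔾 N L W α (f x (ustar 0)) z ≤
      Jstar f 𝕌 𝔾 N L W α x z - z * L (f x (ustar 0)) 0 := by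
  obtain ⟨hWcont, hW0, hWpos, hγ, hN, hA2c⟩ := hA2
  obtain ⟨hLbd, hL00, hLpd, hLmin⟩ := hA3
  have hW : ∀ y, 0 ≤ W y := by
    intro y; rcases eq_or_ne y 0 with h | h
    · simp [h, hW0]
    · exact (hWpos y h).le
  have hL : ∀ y ∈ 𝔾, ∀ v ∈ 𝕌, 0 ≤ L y v := fun y hy v hv => (hLbd y hy v hv).1
  obtain ⟨hU, hq1, hqN, hG⟩ := hfeas
  obtain ⟨q', rfl⟩ : ∃ q', qstar = q' + 1 := ⟨qstar - 1, by omega⟩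
  have hq'1 : 1 ≤ q' := by omega
  set x' := f x (ustar 0) with hx'
  set u' : ℕ → Euc m := fun i => ustar (i + 1) with hu'
  have htraj : ∀ ℓ, traj f x' u' ℓ = traj f x ustar (ℓ + 1) := traj_shift f x ustar
  -- feasibility of the shifted pair
  have hfeas' : Feasible f 𝕌 𝔾 N x' u' q' := by
    refine ⟨fun i => hU (i + 1), hq'1, by omega, ?_⟩
    intro ℓ hℓ
    obtain ⟨h1, h2⟩ := hℓ
    rw [htraj]
    exact hG (ℓ + 1) ⟨by omega, by omega⟩
  -- the sets of W-values
  set S : Set ℝ := (fun ℓ => W (traj f x ustar ℓ)) '' Set.Icc 1 (q' + 1) with hS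
  set S' : Set ℝ := (fun ℓ => W (traj f x' u' ℓ)) '' Set.Icc 1 q' with hS'
  have hSne : S.Nonempty := ⟨W (traj f x ustar 1), 1, ⟨le_refl 1, by omega⟩, rfl⟩
  have hS'ne : S'.Nonempty := ⟨W (traj f x' u' 1), 1, ⟨le_refl 1, hq'1⟩, rfl⟩
  have hSfin : S.Finite := (Set.finite_Icc 1 (q' + 1)).image _
  have hS'fin : S'.Finite := (Set.finite_Icc 1 q').image _
  have hS'subS : S' ⊆ S := by
    rintro s ⟨ℓ, ⟨h1, h2⟩, rfl⟩
    refine ⟨ℓ + 1, ⟨by omega, by omega⟩, ?_⟩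
    show W (traj f x ustar (ℓ + 1)) = W (traj f x' u' ℓ)
    rw [htraj]
  set b : ℝ := W (traj f x ustar 1) with hb
  have hbS : b ∈ S := ⟨1, ⟨le_refl 1, by omega⟩, rfl⟩
  have hSelem : ∀ s ∈ S, s = b ∨ s ∈ S' := by
    rintro s ⟨ℓ, ⟨h1, h2⟩, rfl⟩
    rcases eq_or_lt_of_le h1 with h | h
    · left; rw [← h]
    · right
      refine ⟨ℓ - 1, ⟨by omega, by omega⟩, ?_⟩
      show W (traj f x' u' (ℓ - 1)) = W (traj f x ustar ℓ)
      rw [htraj, show ℓ - 1 + 1 = ℓ from by omega]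
  set a : ℝ := Wlow f W x' u' q' with ha
  have haInf : a = sInf S' := rfl
  have haLB : ∀ s ∈ S', a ≤ s := fun s hs => csInf_le hS'fin.bddBelow hs
  have hWlowS : Wlow f W x ustar (q' + 1) = sInf S := rfl
  -- L at step 1
  set L1 : ℝ := L (traj f x ustar 1) (ustar 0) with hL1
  have htraj1 : traj f x ustar 1 = x' := rfl
  have hL1ge : L x' 0 ≤ L1 := by rw [hL1, htraj1]; exact hLmin x' (ustar 0)
  -- Phi decomposition
  have hPhiDec : Phi f L x ustar (q' + 1) = Phi f L x' u' q' + L1 := by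
    unfold Phi
    rw [Finset.sum_range_succ']
    congr 1
    apply Finset.sum_congr rfl
    intro i _
    rw [htraj (i + 1)]
  have hPhi'nn : 0 ≤ Phi f L x' u' q' := by
    apply Finset.sum_nonneg
    intro i hi
    exact hL _ (hfeas'.2.2.2 (i + 1) ⟨Nat.succ_le_succ (Nat.zero_le i),
      Nat.succ_le_of_lt (Finset.mem_range.mp hi)⟩) _ (hfeas'.1 i)
  by_cases hcase : a ≤ b
  · -- min attained beyond step 1
    have haS' : a ∈ S' := haInf ▸ hS'ne.csInf_mem hS'fin
    have hSeq : sInf S = a := by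
      apply le_antisymm (csInf_le hSfin.bddBelow (hS'subS haS'))
      apply le_csInf hSne
      intro s hs
      rcases hSelem s hs with h | h
      · rw [h]; exact hcase
      · exact haLB s h
    have hJ' : Jcost f L W α x' z u' q' = Jcost f L W α x z ustar (q' + 1) - z * L1 := by
      rw [Jcost, Jcost, hWlowS, hSeq, hPhiDec, ← ha]
      ring
    calc Jstar f 𝕌 𝔾 N L W α x' z ≤ Jcost f L W α x' z u' q' :=
          Jstar_le_Jcost f 𝕌 𝔾 N L W α x' z hW hL hz.le hα.le u' q' hfeas'
      _ = Jstar f 𝕌 𝔾 N L W α x z - z * L1 := by rw [hJ', hopt]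
      _ ≤ Jstar f 𝕌 𝔾 N L W α x z - z * L x' 0 := by
          have := mul_le_mul_of_nonneg_left hL1ge hz.le
          linarith
  · -- min attained only at step 1: contradiction with minimality of q*
    exfalso
    push_neg at hcase
    have hSeqb : sInf S = b := by
      apply le_antisymm (csInf_le hSfin.bddBelow hbS)
      apply le_csInf hSne
      intro s hs
      rcases hSelem s hs with h | h
      · rw [h]
      · exact le_trans hcase.le (haLB s h)
    have hfeas1 : Feasible f 𝕌 𝔾 N x ustar 1 := by
      refine ⟨hU, le_refl 1, hN, ?_⟩
      intro ℓ hℓ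
      obtain ⟨h1, h2⟩ := hℓ
      have : ℓ = 1 := by omega
      subst this
      exact hG 1 ⟨le_refl 1, by omega⟩
    have hW1 : Wlow f W x ustar 1 = b := by
      rw [Wlow, Set.Icc_self, Set.image_singleton, csInf_singleton]
    have hPhi1 : Phi f L x ustar 1 = L1 := by simp [Phi, hL1]
    have hle : Jcost f L W α x z ustar 1 ≤ Jcost f L W α x z ustar (q' + 1) := by
      rw [Jcost, Jcost, hPhi1, hW1, hWlowS, hSeqb]
      have h1 : L1 ≤ Phi f L x ustar (q' + 1) := by rw [hPhiDec]; linarith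
      have := mul_le_mul_of_nonneg_left h1 hz.le
      linarith
    have hge : Jstar f 𝕌 𝔾 N L W α x z ≤ Jcost f L W α x z ustar 1 :=
      Jstar_le_Jcost f 𝕌 𝔾 N L W α x z hW hL hz.le hα.le ustar 1 hfeas1
    have heq : Jcost f L W α x z ustar 1 = Jstar f 𝕌 𝔾 N L W α x z :=
      le_antisymm (hopt ▸ hle) hge
    have := hmin ustar 1 hfeas1 heq
    omega
end
end

section
/- Under assumptions (A2) and (A3), suppose α ≥ 2·N·L̄/(1−γ) and fix β ∈ (0,1). Let x ∈ 𝔾 and z > 0, and let (u*, 1) be a feasible pair with horizon q* = 1 attaining J*(x,z). Set x' := f(x, u*₁) and z' := z if W(x) > z, z' := β·z if W(x) ≤ z. If z' < W(x'), then J*(x', z') ≤ J*(x,z) − z·Q(x'). -/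
open Filter Topology

noncomputable section

/-- Lemma 3: under (A2) and (A3), suppose `α ≥ 2·N·L̄/(1−γ)` and
`β ∈ (0,1)`. If `(u*, 1)` is a feasible pair with horizon `q* = 1` attaining `J*(x,z)`,
`x' := f(x, u*₁)` and `z' := z` if `W(x) > z`, `z' := β·z` otherwise, and `z' < W(x')`, then
`J*(x', z') ≤ J*(x,z) − z·Q(x')`. -/
theorem Jstar_decrease_of_qstar_eq_one {n m : ℕ}
    (f : Euc n → Euc m → Euc n) (𝕌 : Set (Euc m)) (𝔾 : Set (Euc n))
    (W : Euc n → ℝ) (L : Euc n → Euc m → ℝ) (γ Lbar α β : ℝ) (N : ℕ)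
    (hf0 : f 0 0 = 0) (hUcomp : IsCompact 𝕌) (hU0 : (0 : Euc m) ∈ 𝕌)
    (hG0 : (0 : Euc n) ∈ 𝔾)
    (hA2 : A2 f 𝕌 𝔾 W γ N) (hA3 : A3 𝕌 𝔾 L Lbar)
    (hα : 0 < α) (hαbig : 2 * N * Lbar / (1 - γ) ≤ α) (hβ : β ∈ Set.Ioo (0 : ℝ) 1)
    (x : Euc n) (z : ℝ) (hx : x ∈ 𝔾) (hz : 0 < z)
    (ustar : ℕ → Euc m)
    (hfeas : Feasible f 𝕌 𝔾 N x ustar 1)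
    (hopt : Jcost f L W α x z ustar 1 = Jstar f 𝕌 𝔾 N L W α x z)
    (x' : Euc n) (hx' : x' = f x (ustar 0))
    (z' : ℝ) (hz' : z' = if z < W x then z else β * z)
    (hzW : z' < W x') :
    Jstar f 𝕌 𝔾 N L W α x' z' ≤ Jstar f 𝕌 𝔾 N L W α x z - z * L x' 0 := by
  obtain ⟨hWcont, hW0, hWpos, hγ, hN, hcontr⟩ := hA2
  obtain ⟨hLbd, hL00, hLpos, hLmin⟩ := hA3
  have hWnn : ∀ y, 0 ≤ W y := by
    intro y; by_cases h : y = 0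
    · simp [h, hW0]
    · exact (hWpos y h).le
  have hLbar0 : 0 ≤ Lbar := le_trans (hLbd 0 hG0 0 hU0).1 (hLbd 0 hG0 0 hU0).2
  have hγ1 : 0 < 1 - γ := by linarith [hγ.2]
  have hx'G : x' ∈ 𝔾 := by
    have := hfeas.2.2.2 1 ⟨le_refl 1, le_refl 1⟩
    simpa [traj, hx'] using this
  have hz'pos : 0 < z' := by
    rw [hz']; split
    · exact hz
    · exact mul_pos hβ.1 hz
  have hz'le : z' ≤ W x' := hzW.le
  obtain ⟨u, huU, huG, hWlow⟩ := hcontr x' hx'G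
  have hfeas' : Feasible f 𝕌 𝔾 N x' u N := ⟨huU, hN, le_refl N, huG⟩
  have hPhi : Phi f L x' u N ≤ N * Lbar := by
    unfold Phi
    calc ∑ i ∈ Finset.range N, L (traj f x' u (i+1)) (u i)
        ≤ ∑ _i ∈ Finset.range N, Lbar := by
          apply Finset.sum_le_sum
          intro i hi
          have hiN : i + 1 ∈ Set.Icc 1 N :=
            ⟨Nat.succ_le_succ (Nat.zero_le i), Nat.succ_le_of_lt (Finset.mem_range.mp hi)⟩
          exact (hLbd _ (huG _ hiN) _ (huU i)).2
      _ = N * Lbar := by simp [mul_comm]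
  have hJc : Jcost f L W α x' z' u N ≤ α * W x' := by
    have h1 : z' * Phi f L x' u N ≤ z' * (N * Lbar) :=
      mul_le_mul_of_nonneg_left hPhi hz'pos.le
    have h2 : z' * ((N : ℝ) * Lbar) ≤ α * (1 - γ) * W x' := by
      have hNL : (N : ℝ) * Lbar ≤ α * (1 - γ) / 2 := by
        rw [div_le_iff₀ hγ1] at hαbig; nlinarith
      have hNL0 : 0 ≤ (N : ℝ) * Lbar := mul_nonneg (Nat.cast_nonneg N) hLbar0
      have s1 := mul_le_mul_of_nonneg_right hz'le hNL0
      have s2 := mul_le_mul_of_nonneg_left hNL (hWnn x')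
      nlinarith [mul_nonneg (hWnn x') (mul_pos hα hγ1).le]
    have h3 : α * Wlow f W x' u N ≤ α * (γ * W x') :=
      mul_le_mul_of_nonneg_left hWlow hα.le
    unfold Jcost
    nlinarith
  have hbdd : BddBelow {c | ∃ u q, Feasible f 𝕌 𝔾 N x' u q ∧ c = Jcost f L W α x' z' u q} := by
    refine ⟨0, ?_⟩
    rintro c ⟨v, q, hfv, rfl⟩
    have hPhi0 : 0 ≤ Phi f L x' v q := Finset.sum_nonneg (by
      intro i hi
      have hiq : i + 1 ∈ Set.Icc 1 q :=
        ⟨Nat.succ_le_succ (Nat.zero_le i), Nat.succ_le_of_lt (Finset.mem_range.mp hi)⟩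
      exact (hLbd _ (hfv.2.2.2 _ hiq) _ (hfv.1 i)).1)
    have hWl0 : 0 ≤ Wlow f W x' v q :=
      Real.sInf_nonneg (by rintro w ⟨ℓ, _, rfl⟩; exact hWnn _)
    have h1 := mul_nonneg hz'pos.le hPhi0
    have h2 := mul_nonneg hα.le hWl0
    unfold Jcost; linarith
  have hJstar' : Jstar f 𝕌 𝔾 N L W α x' z' ≤ α * W x' :=
    le_trans (csInf_le hbdd ⟨u, N, hfeas', rfl⟩) hJc
  have hJ1 : Jcost f L W α x z ustar 1 = z * L x' (ustar 0) + α * W x' := by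
    unfold Jcost Phi Wlow
    simp [Set.Icc_self, hx', traj]
  rw [← hopt, hJ1]
  have hq : z * L x' 0 ≤ z * L x' (ustar 0) :=
    mul_le_mul_of_nonneg_left (hLmin x' (ustar 0)) hz.le
  linarith
end
end
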